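/- arXiv:1301.5147 — 5 statements merged into one kernel-verified Lean document; each statement's English description precedes it below -/
import Mathlib

section
/- For all integers α, β, the trace of the matrix M(α,β)⁻¹ · F equals 25α² + 25β² − 55αβ − 23. Consequently, trace(M(α,β)⁻¹ · F) = 2 if and only if 25α² + 25β² − 55αβ = 25. -/
open Matrix

/-- The Dehn twist matrix of a simple closed curve of class `α·a + β·b` on the torus. -/
def DehnTwistMatrix (α β : ℤ) : Matrix (Fin 2) (Fin 2) ℤ :=
  !![1 - α * β, α ^ 2; -β ^ 2, 1 + α * β]

/-- The monodromy matrix `F` of the genus-1 Lefschetz fibration. -/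
def Fmat : Matrix (Fin 2) (Fin 2) ℤ := !![-39, 25; -25, 16]

theorem Matrix.inv_fin_two_of_det_eq_one {R : Type*} [CommRing R]
    (A : Matrix (Fin 2) (Fin 2) R) (hA : A.det = 1) :
    A⁻¹ = !![A 1 1, -A 0 1; -A 1 0, A 0 0] := by
  rw [inv_def, hA, Ring.inverse_one, one_smul, adjugate_fin_two]

theorem det_dehnTwistMatrix (α β : ℤ) : (DehnTwistMatrix α β).det = 1 := by
  rw [DehnTwistMatrix, det_fin_two_of]
  ring

theorem inv_dehnTwistMatrix (α β : ℤ) :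
    (DehnTwistMatrix α β)⁻¹ = !![1 + α * β, -α ^ 2; β ^ 2, 1 - α * β] := by
  rw [inv_fin_two_of_det_eq_one _ (det_dehnTwistMatrix α β)]
  simp [DehnTwistMatrix]

theorem trace_inv_dehnTwistMatrix_mul_Fmat (α β : ℤ) :
    ((DehnTwistMatrix α β)⁻¹ * Fmat).trace =
      25 * α ^ 2 + 25 * β ^ 2 - 55 * α * β - 23 := by
  rw [inv_dehnTwistMatrix, Fmat, mul_fin_two, trace_fin_two_of]
  ring

theorem stmt_3 (α β : ℤ) :
    ((DehnTwistMatrix α β)⁻¹ * Fmat).trace =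
      25 * α ^ 2 + 25 * β ^ 2 - 55 * α * β - 23 ∧
    (((DehnTwistMatrix α β)⁻¹ * Fmat).trace = 2 ↔
      25 * α ^ 2 + 25 * β ^ 2 - 55 * α * β = 25) := by
  have htrace := trace_inv_dehnTwistMatrix_mul_Fmat α β
  refine ⟨htrace, ?_⟩
  rw [htrace]
  omega
end

section
/- The set of integer solutions (α, β) of the quadratic Diophantine equation 25α² + 25β² − 55αβ = 25 is exactly the set of column vectors of the form S^k · w, where k ranges over ℤ, S = [[−3, 5], [−5, 8]] (an invertible integer matrix of determinant 1, so that S^k is defined for all integers k), and w ranges over the four vectors (1,0), (−1,0), (0,1), (0,−1). -/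
/-!
Write `Q(a, b) = 5a² - 11ab + 5b²`, so the equation reads `Q(a, b) = 5`. The form `Q` is
invariant under `S`, hence under every `S ^ k`, and `Q = 5` at `(±1, 0)` and `(0, ±1)`.
Conversely, a solution with `ab ≠ 0` has `ab > 0`, and up to sign and swapping `a < b` with
`4a < 3b < 6a`; on that cone `S⁻¹` (or `S` after the swap) strictly decreases `a² + b²`.
Descending on `a² + b²` we reach a solution with a zero coordinate, i.e. `(±1, 0)` or `(0, ±1)`.
-/

open Matrix

/-- The matrix `S = [[-3, 5], [-5, 8]]`; it has determinant 1, hence its integer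
powers `S ^ k` (using the `zpow` of matrices over a commutative ring, which agrees
with the usual inverse since `S` is invertible) are integer matrices. -/
def Smat : Matrix (Fin 2) (Fin 2) ℤ := !![-3, 5; -5, 8]

theorem Matrix.apply_zpow_mulVec_of_apply_mulVec {n R α : Type*} [Fintype n] [DecidableEq n]
    [CommRing R] {A : Matrix n n R} (hA : IsUnit A.det) {f : (n → R) → α}
    (hf : ∀ v, f (A *ᵥ v) = f v) (k : ℤ) (v : n → R) : f (A ^ k *ᵥ v) = f v := by
  induction k using Int.induction_on generalizing v with
  | zero => rw [zpow_zero, one_mulVec]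
  | succ k ih => rw [zpow_add_one hA, ← mulVec_mulVec, ih, hf]
  | pred k ih =>
    rw [zpow_sub_one hA, ← mulVec_mulVec, ih, ← hf, mulVec_mulVec, mul_nonsing_inv _ hA,
      one_mulVec]

def quadForm (v : Fin 2 → ℤ) : ℤ := 5 * v 0 ^ 2 - 11 * v 0 * v 1 + 5 * v 1 ^ 2

lemma quadForm_vec (a b : ℤ) : quadForm ![a, b] = 5 * a ^ 2 - 11 * a * b + 5 * b ^ 2 := rfl

lemma isUnit_det_Smat : IsUnit Smat.det := by
  simp [Smat, det_fin_two_of]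

lemma Smat_mulVec (a b : ℤ) : Smat *ᵥ ![a, b] = ![-3 * a + 5 * b, -5 * a + 8 * b] := by
  ext i; fin_cases i <;> simp [Smat, mulVec, dotProduct]

lemma quadForm_Smat_mulVec (v : Fin 2 → ℤ) : quadForm (Smat *ᵥ v) = quadForm v := by
  simp only [quadForm, mulVec, dotProduct, Fin.sum_univ_two, Smat, of_apply, cons_val',
    cons_val_zero, cons_val_one, cons_val_fin_one]
  ring

lemma quadForm_Smat_zpow_mulVec (k : ℤ) (v : Fin 2 → ℤ) :
    quadForm (Smat ^ k *ᵥ v) = quadForm v :=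
  apply_zpow_mulVec_of_apply_mulVec isUnit_det_Smat quadForm_Smat_mulVec k v

def baseSols : Set (ℤ × ℤ) := {(1, 0), (-1, 0), (0, 1), (0, -1)}

def InSmatOrbit (v : Fin 2 → ℤ) : Prop :=
  ∃ k : ℤ, ∃ w ∈ baseSols, v = Smat ^ k *ᵥ ![w.1, w.2]

lemma inSmatOrbit_of_mem {a b : ℤ} (h : (a, b) ∈ baseSols) : InSmatOrbit ![a, b] :=
  ⟨0, (a, b), h, by simp⟩

lemma InSmatOrbit.zpow_mulVec {v : Fin 2 → ℤ} (h : InSmatOrbit v) (j : ℤ) :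
    InSmatOrbit (Smat ^ j *ᵥ v) := by
  obtain ⟨k, w, hw, rfl⟩ := h
  exact ⟨j + k, w, hw, by rw [mulVec_mulVec, zpow_add isUnit_det_Smat]⟩

lemma InSmatOrbit.neg {v : Fin 2 → ℤ} (h : InSmatOrbit v) : InSmatOrbit (-v) := by
  obtain ⟨k, w, hw, rfl⟩ := h
  refine ⟨k, -w, ?_, ?_⟩
  · simp only [baseSols, Set.mem_insert_iff, Set.mem_singleton_iff] at hw ⊢
    rcases hw with rfl | rfl | rfl | rfl <;> simp
  · rw [← mulVec_neg]; simp

-- `(8a - 5b, 5a - 3b) = S⁻¹ (a, b)`. The equation pins `b / a` near the root `(11 + √21) / 10`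
-- of `Q(1, t) = 0`, in particular inside `(4/3, 2)`, where `S⁻¹` contracts.
lemma sq_add_sq_lt_of_quadForm_eq {a b : ℤ} (ha : 0 < a) (hab : a < b)
    (h : quadForm ![a, b] = 5) :
    (8 * a - 5 * b) ^ 2 + (5 * a - 3 * b) ^ 2 < a ^ 2 + b ^ 2 := by
  rw [quadForm_vec] at h
  have h1 : b < 2 * a := by
    by_contra! h1
    rcases h1.eq_or_lt with rfl | h1
    · have : 3 * a ^ 2 = 5 := by linarith
      omega
    · nlinarith [mul_le_mul_of_nonneg_right (show 1 ≤ b - 2 * a by omega)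
        (show 0 ≤ 5 * b - a by omega)]
  have h2 : 4 * a < 3 * b := by
    by_contra! h2
    nlinarith [mul_nonneg (sub_nonneg.2 h2) (sub_nonneg.2 hab.le),
      mul_nonneg (sub_nonneg.2 h2) ha.le]
  nlinarith [mul_pos (sub_pos.2 h1) (sub_pos.2 h2)]

lemma exists_descent {a b : ℤ} (ha : 0 < a) (hb : 0 < b) (h : quadForm ![a, b] = 5) :
    ∃ c d : ℤ, quadForm ![c, d] = 5 ∧ c ^ 2 + d ^ 2 < a ^ 2 + b ^ 2 ∧
      (InSmatOrbit ![c, d] → InSmatOrbit ![a, b]) := by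
  rcases lt_trichotomy a b with hab | rfl | hab
  · have hS : Smat *ᵥ ![8 * a - 5 * b, 5 * a - 3 * b] = ![a, b] := by
      rw [Smat_mulVec]; congr 2 <;> ring_nf
    refine ⟨8 * a - 5 * b, 5 * a - 3 * b, ?_, sq_add_sq_lt_of_quadForm_eq ha hab h,
      fun hcd => ?_⟩
    · rwa [← quadForm_Smat_mulVec, hS]
    · simpa [hS] using hcd.zpow_mulVec 1
  · rw [quadForm_vec] at h; nlinarith
  · have h' : quadForm ![b, a] = 5 := by rw [quadForm_vec] at h ⊢; linarith
    refine ⟨-3 * a + 5 * b, -5 * a + 8 * b, ?_,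
      by nlinarith [sq_add_sq_lt_of_quadForm_eq hb hab h'], fun hcd => ?_⟩
    · rwa [← Smat_mulVec, quadForm_Smat_mulVec]
    · have := hcd.zpow_mulVec (-1)
      rwa [← Smat_mulVec, mulVec_mulVec, Matrix.zpow_neg_one, nonsing_inv_mul _ isUnit_det_Smat,
        one_mulVec] at this

lemma exists_descent_of_mul_pos {a b : ℤ} (hab : 0 < a * b) (h : quadForm ![a, b] = 5) :
    ∃ c d : ℤ, quadForm ![c, d] = 5 ∧ c ^ 2 + d ^ 2 < a ^ 2 + b ^ 2 ∧
      (InSmatOrbit ![c, d] → InSmatOrbit ![a, b]) := by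
  rcases pos_and_pos_or_neg_and_neg_of_mul_pos hab with ⟨ha, hb⟩ | ⟨ha, hb⟩
  · exact exists_descent ha hb h
  · obtain ⟨c, d, hcd, hlt, himp⟩ :=
      exists_descent (neg_pos.2 ha) (neg_pos.2 hb) (by rw [quadForm_vec] at h ⊢; linarith)
    refine ⟨-c, -d, by rw [quadForm_vec] at hcd ⊢; linarith, by simpa using hlt,
      fun hcd' => ?_⟩
    simpa using (himp (by simpa using hcd'.neg)).neg

theorem inSmatOrbit_of_quadForm_eq (a b : ℤ) (h : quadForm ![a, b] = 5) :
    InSmatOrbit ![a, b] := by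
  have hQ : 5 * a ^ 2 - 11 * a * b + 5 * b ^ 2 = 5 := by rwa [quadForm_vec] at h
  rcases eq_or_ne a 0 with rfl | ha
  · have hb : b = 1 ∨ b = -1 := sq_eq_one_iff.1 (by linarith)
    exact inSmatOrbit_of_mem (by rcases hb with rfl | rfl <;> simp [baseSols])
  rcases eq_or_ne b 0 with rfl | hb
  · have ha : a = 1 ∨ a = -1 := sq_eq_one_iff.1 (by linarith)
    exact inSmatOrbit_of_mem (by rcases ha with rfl | rfl <;> simp [baseSols])
  have hab : 0 < a * b := by nlinarith [sq_pos_of_ne_zero ha, sq_pos_of_ne_zero hb]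
  obtain ⟨c, d, hcd, hlt, himp⟩ := exists_descent_of_mul_pos hab h
  exact himp (inSmatOrbit_of_quadForm_eq c d hcd)
termination_by (a ^ 2 + b ^ 2).toNat
decreasing_by exact (Int.toNat_lt_toNat (lt_of_le_of_lt (by positivity) hlt)).2 hlt

theorem stmt_4 :
    {p : ℤ × ℤ | 25 * p.1 ^ 2 + 25 * p.2 ^ 2 - 55 * p.1 * p.2 = 25} =
      {p : ℤ × ℤ | ∃ k : ℤ,
        ∃ w ∈ ({(1, 0), (-1, 0), (0, 1), (0, -1)} : Set (ℤ × ℤ)),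
          ![p.1, p.2] = (Smat ^ k) *ᵥ ![w.1, w.2]} := by
  ext ⟨a, b⟩
  have hQ : 25 * a ^ 2 + 25 * b ^ 2 - 55 * a * b = 25 ↔ quadForm ![a, b] = 5 := by
    rw [quadForm_vec]
    constructor <;> intro <;> linarith
  refine hQ.trans ⟨inSmatOrbit_of_quadForm_eq a b, ?_⟩
  rintro ⟨k, w, hw, hv⟩
  rw [hv, quadForm_Smat_zpow_mulVec]
  simp only [Set.mem_insert_iff, Set.mem_singleton_iff] at hw
  rcases hw with rfl | rfl | rfl | rfl <;> rfl
end

section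
/- Let A = [[−14, 9], [−25, 16]], B = [[1, 1], [0, 1]], A' = [[−39, 25], [−64, 41]], B' = [[1, 0], [−1, 1]]. There is no 2×2 integer matrix K with det K = 1 such that K⁻¹·A·K = A' and K⁻¹·B·K = B'. -/
/-!
Conjugating `B` to `B'` forces `K = !![a, b; -b, 0]`, so `det K = b ^ 2 = 1` and `b = ±1`.
The `(1, 0)` entry of `A * K = K * A'` then reads `5 * a + 11 * b = 0`, impossible modulo 5.
-/

open Matrix

theorem Matrix.mul_eq_mul_of_inv_mul_mul_eq {n R : Type*} [Fintype n] [DecidableEq n] [CommRing R]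
    {K X Y : Matrix n n R} (hK : IsUnit K.det) (h : K⁻¹ * X * K = Y) : X * K = K * Y := by
  rw [← h, Matrix.mul_assoc, mul_nonsing_inv_cancel_left K (X * K) hK]

theorem upper_transvection_mul_eq_mul_lower_transvection_iff {R : Type*} [CommRing R]
    (K : Matrix (Fin 2) (Fin 2) R) :
    !![1, 1; 0, 1] * K = K * !![1, 0; -1, 1] ↔ K 1 0 = -K 0 1 ∧ K 1 1 = 0 := by
  rw [eta_fin_two K]
  simp

theorem stmt_7 :
    let A : Matrix (Fin 2) (Fin 2) ℤ := !![-14, 9; -25, 16]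
    let B : Matrix (Fin 2) (Fin 2) ℤ := !![1, 1; 0, 1]
    let A' : Matrix (Fin 2) (Fin 2) ℤ := !![-39, 25; -64, 41]
    let B' : Matrix (Fin 2) (Fin 2) ℤ := !![1, 0; -1, 1]
    ¬ ∃ K : Matrix (Fin 2) (Fin 2) ℤ,
        K.det = 1 ∧ K⁻¹ * A * K = A' ∧ K⁻¹ * B * K = B' := by
  intro A B A' B'
  rintro ⟨K, hdet, hA, hB⟩
  have hK : IsUnit K.det := hdet ▸ isUnit_one
  obtain ⟨hK₁₀, hK₁₁⟩ := (upper_transvection_mul_eq_mul_lower_transvection_iff K).mp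
    (mul_eq_mul_of_inv_mul_mul_eq hK hB)
  have hb : K 0 1 * K 0 1 = 1 := by
    rw [det_fin_two, hK₁₀, hK₁₁] at hdet
    linear_combination hdet
  have h₁₀ : -25 * K 0 0 + 16 * K 1 0 = -39 * K 1 0 - 64 * K 1 1 := by
    have h := congrFun (congrFun (mul_eq_mul_of_inv_mul_mul_eq hK hA) 1) 0
    simp only [A, A', mul_apply, Fin.sum_univ_two, of_apply, cons_val', cons_val_zero,
      cons_val_one, cons_val_fin_one] at h
    linarith
  rw [hK₁₀, hK₁₁] at h₁₀
  rcases mul_self_eq_one_iff.mp hb with h | h <;> omega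
end

section
/- Let C be a 2×2 integer matrix with C² = I and det C = −1. If v, w ∈ ℤ² are primitive vectors such that C·v = v and C·w = −w, then the absolute value of the determinant |v₀·w₁ − v₁·w₀| is at most 2. -/
/-!
Put `D = v₀w₁ - v₁w₀`. Eliminating `C` from pairs of the coordinate equations of `C v = v` and
`C w = -w` shows that `D` divides `2 vᵢ wⱼ` for all `i, j` (the eigenvalues `1` and `-1` differ
by `2`). Since `v` and `w` are primitive, the products `vᵢ wⱼ` generate the unit ideal, so `D ∣ 2`.
-/

open Matrix

theorem IsCoprime.dvd_of_dvd_mul_of_dvd_mul {R : Type*} [CommRing R] {a b c d : R}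
    (hab : IsCoprime a b) (ha : d ∣ c * a) (hb : d ∣ c * b) : d ∣ c := by
  obtain ⟨x, y, hxy⟩ := hab
  have hc : c = x * (c * a) + y * (c * b) := by linear_combination -c * hxy
  rw [hc]
  exact dvd_add (ha.mul_left x) (hb.mul_left y)

theorem cross_dvd_two_mul_of_mulVec_eq_neg {R : Type*} [CommRing R]
    (C : Matrix (Fin 2) (Fin 2) R) {v w : Fin 2 → R} (hCv : C *ᵥ v = v) (hCw : C *ᵥ w = -w)
    (i j : Fin 2) : v 0 * w 1 - v 1 * w 0 ∣ 2 * (v i * w j) := by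
  have hv0 := congr_fun hCv 0
  have hv1 := congr_fun hCv 1
  have hw0 := congr_fun hCw 0
  have hw1 := congr_fun hCw 1
  simp only [mulVec, dotProduct, Fin.sum_univ_two, Pi.neg_apply] at hv0 hv1 hw0 hw1
  match i, j with
  | 0, 0 => exact ⟨-C 0 1, by linear_combination v 0 * hw0 - w 0 * hv0⟩
  | 0, 1 => exact ⟨C 0 0 + 1, by linear_combination v 1 * hw0 - w 1 * hv0⟩
  | 1, 0 => exact ⟨C 0 0 - 1, by linear_combination v 1 * hw0 - w 1 * hv0⟩
  | 1, 1 => exact ⟨C 1 0, by linear_combination v 1 * hw1 - w 1 * hv1⟩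

theorem cross_dvd_two_of_mulVec_eq_neg {R : Type*} [CommRing R]
    (C : Matrix (Fin 2) (Fin 2) R) {v w : Fin 2 → R} (hv : IsCoprime (v 0) (v 1))
    (hw : IsCoprime (w 0) (w 1)) (hCv : C *ᵥ v = v) (hCw : C *ᵥ w = -w) :
    v 0 * w 1 - v 1 * w 0 ∣ 2 := by
  have hdvd := cross_dvd_two_mul_of_mulVec_eq_neg C hCv hCw
  have hdvd_w (j : Fin 2) : v 0 * w 1 - v 1 * w 0 ∣ 2 * w j :=
    hv.dvd_of_dvd_mul_of_dvd_mul (by convert hdvd 0 j using 1; ring)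
      (by convert hdvd 1 j using 1; ring)
  exact hw.dvd_of_dvd_mul_of_dvd_mul (hdvd_w 0) (hdvd_w 1)

theorem stmt_9_general (C : Matrix (Fin 2) (Fin 2) ℤ)
    (v w : Fin 2 → ℤ) (hv : IsCoprime (v 0) (v 1)) (hw : IsCoprime (w 0) (w 1))
    (hCv : C *ᵥ v = v) (hCw : C *ᵥ w = -w) :
    |v 0 * w 1 - v 1 * w 0| ≤ 2 :=
  Int.le_of_dvd two_pos ((abs_dvd _ _).mpr (cross_dvd_two_of_mulVec_eq_neg C hv hw hCv hCw))

theorem stmt_9 (C : Matrix (Fin 2) (Fin 2) ℤ) (hC2 : C ^ 2 = 1) (hCdet : C.det = -1)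
    (v w : Fin 2 → ℤ) (hv : IsCoprime (v 0) (v 1)) (hw : IsCoprime (w 0) (w 1))
    (hCv : C *ᵥ v = v) (hCw : C *ᵥ w = -w) :
    |v 0 * w 1 - v 1 * w 0| ≤ 2 :=
  stmt_9_general C v w hv hw hCv hCw
end

section
/- The ordered pair of matrices (M(3,5), M(1,0)) = ([[−14,9],[−25,16]], [[1,1],[0,1]]) is not Hurwitz equivalent to the ordered pair (M(5,8), M(0,1)) = ([[−39,25],[−64,41]], [[1,0],[−1,1]]). -/
open Matrix

/-- Elementary Hurwitz moves and global conjugation on ordered pairs of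
2×2 integer matrices of determinant 1. -/
inductive HurwitzMove :
    (Matrix (Fin 2) (Fin 2) ℤ × Matrix (Fin 2) (Fin 2) ℤ) →
    (Matrix (Fin 2) (Fin 2) ℤ × Matrix (Fin 2) (Fin 2) ℤ) → Prop
  | move1 (A B : Matrix (Fin 2) (Fin 2) ℤ) :
      HurwitzMove (A, B) (A⁻¹ * B * A, A)
  | move2 (A B : Matrix (Fin 2) (Fin 2) ℤ) :
      HurwitzMove (A, B) (B, B * A * B⁻¹)
  | conj (A B K : Matrix (Fin 2) (Fin 2) ℤ) (hK : K.det = 1) :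
      HurwitzMove (A, B) (K⁻¹ * A * K, K⁻¹ * B * K)

/-- Hurwitz equivalence: the equivalence relation generated by the elementary
Hurwitz moves together with global conjugation. -/
def HurwitzEquiv :
    (Matrix (Fin 2) (Fin 2) ℤ × Matrix (Fin 2) (Fin 2) ℤ) →
    (Matrix (Fin 2) (Fin 2) ℤ × Matrix (Fin 2) (Fin 2) ℤ) → Prop :=
  Relation.EqvGen HurwitzMove

/-!
For a pair `P = (A, B)` with `det (B * A) = 1`, applying the first Hurwitz move twice conjugates
`P` by the product `B * A`, and the second move agrees with the first one up to conjugation by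
`(B * A)⁻¹`. Hence everything Hurwitz equivalent to `P` is simultaneously conjugate, by a matrix of
determinant one, to `P` or to `(A⁻¹ * B * A, A)`. For `P = (M(3,5), M(1,0))` the latter pair is
`(M(16,25), M(3,5))`. Writing `K = !![a, b; c, d]`, conjugating `M(0,1)` to `M(1,0)` or to `M(3,5)`
forces `b = ±1` resp. `5 * a - 3 * c = ±1`, and the resulting linear conditions on `K` from
conjugating `M(5,8)` have no integer solution.
-/

section

variable {n R : Type*} [Fintype n] [DecidableEq n] [CommRing R]

def IsSimulConj (P Q : Matrix n n R × Matrix n n R) : Prop :=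
  ∃ K : Matrix n n R, K.det = 1 ∧ SemiconjBy K P.1 Q.1 ∧ SemiconjBy K P.2 Q.2

noncomputable def hurwitz₁ (P : Matrix n n R × Matrix n n R) : Matrix n n R × Matrix n n R :=
  (P.1⁻¹ * P.2 * P.1, P.1)

noncomputable def hurwitz₂ (P : Matrix n n R × Matrix n n R) : Matrix n n R × Matrix n n R :=
  (P.2, P.2 * P.1 * P.2⁻¹)

lemma isUnit_det_of_det_eq_one {K : Matrix n n R} (hK : K.det = 1) : IsUnit K.det :=
  hK ▸ isUnit_one

lemma isUnit_det_of_det_mul_eq_one {A B : Matrix n n R} (h : (B * A).det = 1) :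
    IsUnit B.det ∧ IsUnit A.det :=
  IsUnit.mul_iff.mp (det_mul B A ▸ h ▸ isUnit_one)

lemma SemiconjBy.det_eq {K A B : Matrix n n R} (hK : K.det = 1) (h : SemiconjBy K A B) :
    A.det = B.det := by
  simpa [det_mul, hK, mul_comm] using congrArg det h.eq

lemma SemiconjBy.nonsing_inv_symm_left {K A B : Matrix n n R} (hK : IsUnit K.det)
    (h : SemiconjBy K A B) : SemiconjBy K⁻¹ B A :=
  h.units_inv_symm_left (a := nonsingInvUnit K hK)

/-- No invertibility of `A` is needed: otherwise both inverses are the junk value `0`. -/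
lemma SemiconjBy.nonsing_inv {K A B : Matrix n n R} (hK : K.det = 1)
    (h : SemiconjBy K A B) : SemiconjBy K A⁻¹ B⁻¹ := by
  have hKu := isUnit_det_of_det_eq_one hK
  have hA : A = K⁻¹ * B * K := by
    rw [mul_assoc, ← h.eq]
    exact (nonsing_inv_mul_cancel_left _ _ hKu).symm
  rw [SemiconjBy, hA, Matrix.mul_inv_rev, Matrix.mul_inv_rev, nonsing_inv_nonsing_inv _ hKu]
  exact mul_nonsing_inv_cancel_left _ _ hKu

namespace IsSimulConj

variable {P Q S : Matrix n n R × Matrix n n R}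

lemma refl (P : Matrix n n R × Matrix n n R) : IsSimulConj P P :=
  ⟨1, det_one, .one_left _, .one_left _⟩

lemma symm (h : IsSimulConj P Q) : IsSimulConj Q P := by
  obtain ⟨K, hK, h₁, h₂⟩ := h
  have hKu := isUnit_det_of_det_eq_one hK
  exact ⟨K⁻¹, by rw [det_nonsing_inv, hK, Ring.inverse_one],
    h₁.nonsing_inv_symm_left hKu, h₂.nonsing_inv_symm_left hKu⟩

lemma trans (h : IsSimulConj P Q) (h' : IsSimulConj Q S) : IsSimulConj P S := by
  obtain ⟨K, hK, h₁, h₂⟩ := h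
  obtain ⟨K', hK', h₁', h₂'⟩ := h'
  exact ⟨K' * K, by rw [det_mul, hK, hK', one_mul], h₁'.mul_left h₁, h₂'.mul_left h₂⟩

lemma det_fst_eq (h : IsSimulConj P Q) : P.1.det = Q.1.det := by
  obtain ⟨K, hK, h₁, -⟩ := h
  exact h₁.det_eq hK

lemma det_snd_eq (h : IsSimulConj P Q) : P.2.det = Q.2.det := by
  obtain ⟨K, hK, -, h₂⟩ := h
  exact h₂.det_eq hK

lemma hurwitz₁ (h : IsSimulConj P Q) : IsSimulConj (hurwitz₁ P) (hurwitz₁ Q) := by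
  obtain ⟨K, hK, h₁, h₂⟩ := h
  exact ⟨K, hK, ((h₁.nonsing_inv hK).mul_right h₂).mul_right h₁, h₁⟩

lemma hurwitz₂ (h : IsSimulConj P Q) : IsSimulConj (hurwitz₂ P) (hurwitz₂ Q) := by
  obtain ⟨K, hK, h₁, h₂⟩ := h
  exact ⟨K, hK, h₂, (h₂.mul_right h₁).mul_right (h₂.nonsing_inv hK)⟩

end IsSimulConj

lemma isSimulConj_conj {K : Matrix n n R} (hK : K.det = 1) (A B : Matrix n n R) :
    IsSimulConj (K⁻¹ * A * K, K⁻¹ * B * K) (A, B) := by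
  have hKu := isUnit_det_of_det_eq_one hK
  refine ⟨K, hK, ?_, ?_⟩ <;>
    simp only [SemiconjBy, ← mul_assoc, mul_nonsing_inv _ hKu, one_mul]

lemma hurwitz₂_hurwitz₁ {P : Matrix n n R × Matrix n n R} (h : IsUnit P.1.det) :
    hurwitz₂ (hurwitz₁ P) = P := by
  simp [hurwitz₁, hurwitz₂, mul_assoc, h]

lemma hurwitz₁_hurwitz₂ {P : Matrix n n R × Matrix n n R} (h : IsUnit P.2.det) :
    hurwitz₁ (hurwitz₂ P) = P := by
  simp [hurwitz₁, hurwitz₂, mul_assoc, h]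

lemma isSimulConj_hurwitz₁_hurwitz₁ {P : Matrix n n R × Matrix n n R}
    (h : (P.2 * P.1).det = 1) : IsSimulConj (hurwitz₁ (hurwitz₁ P)) P := by
  obtain ⟨hB, hA⟩ := isUnit_det_of_det_mul_eq_one h
  refine ⟨P.2 * P.1, h, ?_, ?_⟩ <;>
    simp [SemiconjBy, hurwitz₁, Matrix.mul_inv_rev, mul_assoc, hA, hB]

lemma isSimulConj_hurwitz₂_hurwitz₁ {P : Matrix n n R × Matrix n n R}
    (h : (P.2 * P.1).det = 1) : IsSimulConj (hurwitz₂ P) (hurwitz₁ P) := by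
  obtain ⟨hB, hA⟩ := isUnit_det_of_det_mul_eq_one h
  refine ⟨(P.2 * P.1)⁻¹, by rw [det_nonsing_inv, h, Ring.inverse_one], ?_, ?_⟩ <;>
    simp [SemiconjBy, hurwitz₁, hurwitz₂, Matrix.mul_inv_rev, mul_assoc, hA, hB]

def HurwitzConjClass (P₀ P : Matrix n n R × Matrix n n R) : Prop :=
  IsSimulConj P P₀ ∨ IsSimulConj P (hurwitz₁ P₀)

namespace HurwitzConjClass

variable {P₀ P : Matrix n n R × Matrix n n R}

lemma hurwitz₁ (h₀ : (P₀.2 * P₀.1).det = 1) (h : HurwitzConjClass P₀ P) :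
    HurwitzConjClass P₀ (hurwitz₁ P) := by
  rcases h with h | h
  · exact .inr h.hurwitz₁
  · exact .inl (h.hurwitz₁.trans (isSimulConj_hurwitz₁_hurwitz₁ h₀))

lemma hurwitz₂ (h₀ : (P₀.2 * P₀.1).det = 1) (h : HurwitzConjClass P₀ P) :
    HurwitzConjClass P₀ (hurwitz₂ P) := by
  rcases h with h | h
  · exact .inr (h.hurwitz₂.trans (isSimulConj_hurwitz₂_hurwitz₁ h₀))
  · exact .inl (hurwitz₂_hurwitz₁ (isUnit_det_of_det_mul_eq_one h₀).2 ▸ h.hurwitz₂)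

lemma conj {K : Matrix n n R} (hK : K.det = 1) {A B : Matrix n n R}
    (h : HurwitzConjClass P₀ (A, B)) : HurwitzConjClass P₀ (K⁻¹ * A * K, K⁻¹ * B * K) :=
  h.imp (isSimulConj_conj hK A B).trans (isSimulConj_conj hK A B).trans

lemma of_conj {K : Matrix n n R} (hK : K.det = 1) {A B : Matrix n n R}
    (h : HurwitzConjClass P₀ (K⁻¹ * A * K, K⁻¹ * B * K)) : HurwitzConjClass P₀ (A, B) :=
  h.imp (isSimulConj_conj hK A B).symm.trans (isSimulConj_conj hK A B).symm.trans

lemma isUnit_det (h₀ : (P₀.2 * P₀.1).det = 1) (h : HurwitzConjClass P₀ P) :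
    IsUnit P.1.det ∧ IsUnit P.2.det := by
  obtain ⟨hB, hA⟩ := isUnit_det_of_det_mul_eq_one h₀
  rcases h with h | h <;> rw [h.det_fst_eq, h.det_snd_eq]
  · exact ⟨hA, hB⟩
  · simp [_root_.hurwitz₁, hA, hB]

end HurwitzConjClass

end

lemma HurwitzMove.hurwitzConjClass_iff
    {P₀ P Q : Matrix (Fin 2) (Fin 2) ℤ × Matrix (Fin 2) (Fin 2) ℤ}
    (h : HurwitzMove P Q) (h₀ : (P₀.2 * P₀.1).det = 1) :
    HurwitzConjClass P₀ P ↔ HurwitzConjClass P₀ Q := by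
  cases h with
  | move1 A B =>
    refine ⟨HurwitzConjClass.hurwitz₁ h₀, fun hQ => ?_⟩
    rw [← hurwitz₂_hurwitz₁ (P := (A, B)) (hQ.isUnit_det h₀).2]
    exact hQ.hurwitz₂ h₀
  | move2 A B =>
    refine ⟨HurwitzConjClass.hurwitz₂ h₀, fun hQ => ?_⟩
    rw [← hurwitz₁_hurwitz₂ (P := (A, B)) (hQ.isUnit_det h₀).1]
    exact hQ.hurwitz₁ h₀
  | conj A B K hK => exact ⟨HurwitzConjClass.conj hK, HurwitzConjClass.of_conj hK⟩

lemma HurwitzEquiv.hurwitzConjClass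
    {P₀ P : Matrix (Fin 2) (Fin 2) ℤ × Matrix (Fin 2) (Fin 2) ℤ}
    (h : HurwitzEquiv P₀ P) (h₀ : (P₀.2 * P₀.1).det = 1) : HurwitzConjClass P₀ P := by
  have key : ∀ P Q, HurwitzEquiv P Q → (HurwitzConjClass P₀ P ↔ HurwitzConjClass P₀ Q) := by
    intro P Q h
    induction h with
    | rel _ _ h => exact h.hurwitzConjClass_iff h₀
    | refl _ => exact Iff.rfl
    | symm _ _ _ ih => exact ih.symm
    | trans _ _ _ _ _ ih₁ ih₂ => exact ih₁.trans ih₂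
  exact (key P₀ P h).mp (.inl (.refl P₀))

lemma SemiconjBy.entries_of_fin_two {R : Type*} [Semiring R] {K : Matrix (Fin 2) (Fin 2) R}
    {x₁ x₂ x₃ x₄ y₁ y₂ y₃ y₄ : R} (h : SemiconjBy K !![x₁, x₂; x₃, x₄] !![y₁, y₂; y₃, y₄]) :
    K 0 0 * x₁ + K 0 1 * x₃ = y₁ * K 0 0 + y₂ * K 1 0 ∧
    K 0 0 * x₂ + K 0 1 * x₄ = y₁ * K 0 1 + y₂ * K 1 1 ∧
    K 1 0 * x₁ + K 1 1 * x₃ = y₃ * K 0 0 + y₄ * K 1 0 ∧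
    K 1 0 * x₂ + K 1 1 * x₄ = y₃ * K 0 1 + y₄ * K 1 1 := by
  have h' := h.eq
  rw [eta_fin_two K, mul_fin_two, mul_fin_two] at h'
  simpa [← Matrix.ext_iff, Fin.forall_fin_two, and_assoc] using h'

def dehnTwist (α β : ℤ) : Matrix (Fin 2) (Fin 2) ℤ :=
  !![1 - α * β, α ^ 2; -β ^ 2, 1 + α * β]

lemma hurwitz₁_dehnTwist :
    hurwitz₁ (dehnTwist 3 5, dehnTwist 1 0) = (dehnTwist 16 25, dehnTwist 3 5) := by
  have hinv : (dehnTwist 3 5)⁻¹ = !![16, -9; 25, -14] := inv_eq_left_inv (by decide)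
  simp only [hurwitz₁, hinv, Prod.mk.injEq, and_true]
  decide

lemma not_isSimulConj_dehnTwist :
    ¬ IsSimulConj (dehnTwist 5 8, dehnTwist 0 1) (dehnTwist 3 5, dehnTwist 1 0) := by
  rintro ⟨K, hK, h₁, h₂⟩
  rw [det_fin_two] at hK
  obtain ⟨-, -, e, -⟩ := h₁.entries_of_fin_two
  obtain ⟨hc, hd, -, -⟩ := h₂.entries_of_fin_two
  norm_num at e hc hd
  have hb : K 0 1 * K 0 1 = 1 * 1 := by linear_combination hK - K 0 0 * hd - K 0 1 * hc
  rcases mul_self_eq_mul_self_iff.mp hb with hb | hb <;> omega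

lemma not_isSimulConj_hurwitz₁_dehnTwist :
    ¬ IsSimulConj (dehnTwist 5 8, dehnTwist 0 1) (dehnTwist 16 25, dehnTwist 3 5) := by
  rintro ⟨K, hK, h₁, h₂⟩
  rw [det_fin_two] at hK
  obtain ⟨-, -, e, -⟩ := h₁.entries_of_fin_two
  obtain ⟨hb, -, hd, -⟩ := h₂.entries_of_fin_two
  norm_num at e hb hd
  have hs : (5 * K 0 0 - 3 * K 1 0) * (5 * K 0 0 - 3 * K 1 0) = 1 * 1 := by
    linear_combination hK + K 0 0 * hd - K 1 0 * hb
  rcases mul_self_eq_mul_self_iff.mp hs with hs | hs <;> omega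

theorem stmt_14 :
    ¬ HurwitzEquiv (!![-14, 9; -25, 16], !![1, 1; 0, 1])
        (!![-39, 25; -64, 41], !![1, 0; -1, 1]) := by
  intro h
  change HurwitzEquiv (dehnTwist 3 5, dehnTwist 1 0) (dehnTwist 5 8, dehnTwist 0 1) at h
  have hF : (dehnTwist 1 0 * dehnTwist 3 5).det = 1 := by decide
  rcases h.hurwitzConjClass hF with h' | h'
  · exact not_isSimulConj_dehnTwist h'
  · rw [hurwitz₁_dehnTwist] at h'
    exact not_isSimulConj_hurwitz₁_dehnTwist h'
end
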